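/- Let P = (−∂ₓ²)^{−1} on 2L-periodic zero-mean L² functions, and let u ∈ H¹ periodic. Then the nonlinear convective term satisfies |(P(u u'), u)_{L²}| ≤ d₀ ‖u²‖_{L²} ‖P^{1/2}u‖_{L²}, where d₀ = max{L/π, 1} and (·,·) is the L² inner product; consequently, for every ε > 0, 2|(P(uu'),u)| ≤ ε ∫ u⁴ dx + (d₀²/ε)‖P^{1/2}u‖²_{L²}. -/

import Mathlib

/-!
With `q = P u` and `w = P (u u')` we have `-q'' = u` and `-w'' = u u'`, and
`‖P^{1/2} u‖² = (u, q)`. Periodic integration by parts moves derivatives freely between factors: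
`(w, u) = -(w, q'') = -(w'', q) = (u u', q) = -½ (u², q')` and `(u, q) = -(q'', q) = ‖q'‖²`.
Cauchy–Schwarz then bounds `|(w, u)|` by `½ ‖u²‖ ‖q'‖ ≤ d₀ ‖u²‖ ‖P^{1/2} u‖`, and the second
estimate is Young's inequality `2ab ≤ ε a² + b²/ε`.
-/

open Real Filter Set MeasureTheory

theorem abs_integral_mul_le_sqrt_mul_sqrt {α : Type*} [MeasurableSpace α] {μ : Measure α}
    {f g : α → ℝ} (hf : Integrable (fun x => f x ^ 2) μ) (hg : Integrable (fun x => g x ^ 2) μ)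
    (hfg : Integrable (fun x => f x * g x) μ) :
    |∫ x, f x * g x ∂μ| ≤ √(∫ x, f x ^ 2 ∂μ) * √(∫ x, g x ^ 2 ∂μ) := by
  set F := ∫ x, f x ^ 2 ∂μ
  set G := ∫ x, g x ^ 2 ∂μ
  set C := ∫ x, f x * g x ∂μ
  have quadratic_nonneg : ∀ t : ℝ, 0 ≤ F * (t * t) + 2 * C * t + G := by
    intro t
    have expand : ∫ x, (t * f x + g x) ^ 2 ∂μ = F * (t * t) + 2 * C * t + G := by
      have pointwise : ∀ x,
          (t * f x + g x) ^ 2 = (t * t) * f x ^ 2 + (2 * t) * (f x * g x) + g x ^ 2 :=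
        fun x => by ring
      have h₁ : Integrable (fun x => (t * t) * f x ^ 2 + (2 * t) * (f x * g x)) μ :=
        (hf.const_mul _).add (hfg.const_mul _)
      simp_rw [pointwise]
      rw [integral_add h₁ hg, integral_add (hf.const_mul _) (hfg.const_mul _),
        integral_const_mul, integral_const_mul]
      ring
    exact expand ▸ integral_nonneg fun x => sq_nonneg _
  have hC : C ^ 2 ≤ F * G := by
    have := discrim_le_zero quadratic_nonneg
    rw [discrim] at this
    linarith
  calc |C| = √(C ^ 2) := (sqrt_sq_eq_abs C).symm
    _ ≤ √(F * G) := sqrt_le_sqrt hC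
    _ = √F * √G := sqrt_mul (integral_nonneg fun x => sq_nonneg _) _

theorem abs_intervalIntegral_mul_le_sqrt_mul_sqrt {f g : ℝ → ℝ} {a b : ℝ} (hab : a ≤ b)
    (hf : Continuous f) (hg : Continuous g) :
    |∫ x in a..b, f x * g x| ≤ √(∫ x in a..b, f x ^ 2) * √(∫ x in a..b, g x ^ 2) := by
  simp only [intervalIntegral.integral_of_le hab]
  exact abs_integral_mul_le_sqrt_mul_sqrt (hf.pow 2).integrableOn_Ioc
    (hg.pow 2).integrableOn_Ioc (hf.mul hg).integrableOn_Ioc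

section Derivatives

variable {𝕜 F : Type*} [NontriviallyNormedField 𝕜] [NormedAddCommGroup F] [NormedSpace 𝕜 F]
  {f : 𝕜 → F}

theorem Function.Periodic.deriv {T : 𝕜} (hf : Function.Periodic f T) :
    Function.Periodic (deriv f) T := fun x => by
  rw [← deriv_comp_add_const, funext hf]

theorem ContDiff.hasDerivAt_deriv (hf : ContDiff 𝕜 1 f) (x : 𝕜) : HasDerivAt f (deriv f x) x :=
  (hf.differentiable one_ne_zero x).hasDerivAt

end Derivatives

theorem integral_mul_deriv_eq_neg_integral_deriv_mul_of_periodic {f g f' g' : ℝ → ℝ} {a b : ℝ}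
    (hf : ∀ x, HasDerivAt f (f' x) x) (hg : ∀ x, HasDerivAt g (g' x) x)
    (hf' : Continuous f') (hg' : Continuous g')
    (hfp : Function.Periodic f (b - a)) (hgp : Function.Periodic g (b - a)) :
    ∫ x in a..b, f x * g' x = -∫ x in a..b, f' x * g x := by
  have hfb : f b = f a := by simpa using hfp a
  have hgb : g b = g a := by simpa using hgp a
  rw [intervalIntegral.integral_mul_deriv_eq_deriv_mul (fun x _ => hf x) (fun x _ => hg x)
    (hf'.intervalIntegrable a b) (hg'.intervalIntegrable a b), hfb, hgb, sub_self, zero_sub]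

theorem integral_mul_deriv_deriv_of_periodic {f g : ℝ → ℝ} {a b : ℝ} (hg : ContDiff ℝ 1 g)
    (hf : ContDiff ℝ 2 f) (hgp : Function.Periodic g (b - a)) (hfp : Function.Periodic f (b - a)) :
    ∫ x in a..b, g x * deriv (deriv f) x = -∫ x in a..b, deriv g x * deriv f x :=
  integral_mul_deriv_eq_neg_integral_deriv_mul_of_periodic hg.hasDerivAt_deriv
    hf.deriv'.hasDerivAt_deriv hg.continuous_deriv_one hf.deriv'.continuous_deriv_one hgp hfp.deriv

section PeriodicPoisson

variable {u q w : ℝ → ℝ} {a b : ℝ}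

theorem integral_mul_eq_integral_deriv_sq_of_deriv_deriv_eq_neg (hq : ContDiff ℝ 2 q)
    (hqp : Function.Periodic q (b - a)) (hqeq : ∀ x, deriv (deriv q) x = -(u x)) :
    ∫ x in a..b, u x * q x = ∫ x in a..b, deriv q x ^ 2 := by
  calc ∫ x in a..b, u x * q x = -∫ x in a..b, q x * deriv (deriv q) x := by
        simp [hqeq, mul_comm]
    _ = ∫ x in a..b, deriv q x ^ 2 := by
        rw [integral_mul_deriv_deriv_of_periodic hq.of_succ hq hqp hqp, neg_neg]
        simp only [sq]

theorem integral_mul_eq_neg_half_integral_sq_mul_deriv (hu : ContDiff ℝ 1 u)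
    (hup : Function.Periodic u (b - a)) (hq : ContDiff ℝ 2 q) (hqp : Function.Periodic q (b - a))
    (hqeq : ∀ x, deriv (deriv q) x = -(u x)) (hw : ContDiff ℝ 2 w)
    (hwp : Function.Periodic w (b - a)) (hweq : ∀ x, deriv (deriv w) x = -(u x * deriv u x)) :
    ∫ x in a..b, w x * u x = -(1 / 2) * ∫ x in a..b, u x ^ 2 * deriv q x := by
  have hu_sq : ∀ x, HasDerivAt (fun y => u y * u y / 2) (u x * deriv u x) x := fun x =>
    (((hu.hasDerivAt_deriv x).mul (hu.hasDerivAt_deriv x)).div_const 2).congr_deriv (by ring)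
  calc ∫ x in a..b, w x * u x = -∫ x in a..b, w x * deriv (deriv q) x := by
        simp [hqeq]
    _ = -∫ x in a..b, q x * deriv (deriv w) x := by
        rw [integral_mul_deriv_deriv_of_periodic hw.of_succ hq hwp hqp,
          integral_mul_deriv_deriv_of_periodic hq.of_succ hw hqp hwp]
        simp only [mul_comm]
    _ = ∫ x in a..b, q x * (u x * deriv u x) := by simp [hweq]
    _ = -∫ x in a..b, deriv q x * (u x * u x / 2) :=
        integral_mul_deriv_eq_neg_integral_deriv_mul_of_periodic hq.of_succ.hasDerivAt_deriv
          hu_sq (hq.continuous_deriv (by norm_num)) (hu.continuous.mul hu.continuous_deriv_one)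
          hqp fun x => by simp only [hup x]
    _ = -(1 / 2) * ∫ x in a..b, u x ^ 2 * deriv q x := by
        rw [neg_mul, ← intervalIntegral.integral_const_mul]
        congr 1
        refine intervalIntegral.integral_congr fun x _ => ?_
        ring

end PeriodicPoisson

theorem convective_term_estimate_general (L : ℝ) (hL : 0 < L) (u q w : ℝ → ℝ)
    (hu : ContDiff ℝ 1 u) (huper : Function.Periodic u (2 * L))
    (hq : ContDiff ℝ 2 q) (hqper : Function.Periodic q (2 * L))
    (hqeq : ∀ x, deriv (deriv q) x = -(u x))
    (hw : ContDiff ℝ 2 w) (hwper : Function.Periodic w (2 * L))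
    (hweq : ∀ x, deriv (deriv w) x = -(u x * deriv u x)) :
    |∫ x in (-L)..L, w x * u x| ≤
      max (L / Real.pi) 1 * Real.sqrt (∫ x in (-L)..L, (u x) ^ 4) *
        Real.sqrt (∫ x in (-L)..L, u x * q x) ∧
    ∀ ε > (0:ℝ),
      2 * |∫ x in (-L)..L, w x * u x| ≤
        ε * (∫ x in (-L)..L, (u x) ^ 4)
          + ((max (L / Real.pi) 1) ^ 2 / ε) * ∫ x in (-L)..L, u x * q x := by
  rw [show 2 * L = L - -L by ring] at huper hqper hwper
  have energy := integral_mul_eq_integral_deriv_sq_of_deriv_deriv_eq_neg hq hqper hqeq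
  set d₀ := max (L / π) 1
  set A := ∫ x in (-L)..L, u x ^ 4
  set B := ∫ x in (-L)..L, u x * q x
  have hA : 0 ≤ A := intervalIntegral.integral_nonneg (by linarith) fun x _ => by positivity
  have hB : 0 ≤ B := energy ▸ intervalIntegral.integral_nonneg (by linarith) fun x _ => sq_nonneg _
  have cauchy_schwarz : |∫ x in (-L)..L, u x ^ 2 * deriv q x| ≤ √A * √B := by
    simpa only [Pi.pow_apply, ← pow_mul, energy] using
      abs_intervalIntegral_mul_le_sqrt_mul_sqrt (by linarith : -L ≤ L)
        (hu.continuous.pow 2) (hq.continuous_deriv (by norm_num))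
  have bound : |∫ x in (-L)..L, w x * u x| ≤ d₀ * √A * √B := by
    have hd₀ : (1 : ℝ) ≤ d₀ := le_max_right _ _
    rw [integral_mul_eq_neg_half_integral_sq_mul_deriv hu huper hq hqper hqeq hw hwper hweq,
      abs_mul, abs_neg, abs_of_pos (by norm_num : (0 : ℝ) < 1 / 2), mul_assoc]
    nlinarith [mul_nonneg (sqrt_nonneg A) (sqrt_nonneg B),
      abs_nonneg (∫ x in (-L)..L, u x ^ 2 * deriv q x)]
  refine ⟨bound, fun ε hε => ?_⟩
  calc 2 * |∫ x in (-L)..L, w x * u x| ≤ 2 * √A * (d₀ * √B) := by linarith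
    _ ≤ ε * √A ^ 2 + ε⁻¹ * (d₀ * √B) ^ 2 := two_mul_le_add_mul_sq hε
    _ = ε * A + d₀ ^ 2 / ε * B := by rw [mul_pow, sq_sqrt hA, sq_sqrt hB]; ring

/-- Estimate of the convective term: with `q = P u` and `w = P (u u')`
(`P = (-∂ₓ²)^{-1}` on `2L`-periodic zero-mean functions, so `-q'' = u`, `-w'' = u u'`),
and `d₀ = max {L/π, 1}`, one has
`|(P(u u'), u)| ≤ d₀ ‖u²‖_{L²} ‖P^{1/2} u‖_{L²}` where `‖P^{1/2}u‖² = (P u, u)`,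
and hence `2 |(P(u u'), u)| ≤ ε ∫ u⁴ + (d₀²/ε) (P u, u)` for every `ε > 0`. -/
theorem convective_term_estimate (L : ℝ) (hL : 0 < L) (u q w : ℝ → ℝ)
    (hu : ContDiff ℝ 1 u) (huper : Function.Periodic u (2 * L))
    (humean : ∫ x in (-L)..L, u x = 0)
    (hq : ContDiff ℝ 2 q) (hqper : Function.Periodic q (2 * L))
    (hqmean : ∫ x in (-L)..L, q x = 0)
    (hqeq : ∀ x, deriv (deriv q) x = -(u x))
    (hw : ContDiff ℝ 2 w) (hwper : Function.Periodic w (2 * L))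
    (hwmean : ∫ x in (-L)..L, w x = 0)
    (hweq : ∀ x, deriv (deriv w) x = -(u x * deriv u x)) :
    |∫ x in (-L)..L, w x * u x| ≤
      max (L / Real.pi) 1 * Real.sqrt (∫ x in (-L)..L, (u x) ^ 4) *
        Real.sqrt (∫ x in (-L)..L, u x * q x) ∧
    ∀ ε > (0:ℝ),
      2 * |∫ x in (-L)..L, w x * u x| ≤
        ε * (∫ x in (-L)..L, (u x) ^ 4)
          + ((max (L / Real.pi) 1) ^ 2 / ε) * ∫ x in (-L)..L, u x * q x :=
  convective_term_estimate_general L hL u q w hu huper hq hqper hqeq hw hwper hweq
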